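/- arXiv:1706.03223 — 3 statements merged into one kernel-verified Lean document; each statement's English description precedes it below -/
import Mathlib

section
/- Let H be a real Hilbert space, f ∈ H, τ > 0, K ⊆ H a nonempty closed convex set, and Φ the support function of K, i.e. Φ(u) = sup_{v ∈ K} ⟨u, v⟩. Then u* minimizes u ↦ (1/(2τ))‖u − f‖² + Φ(u) over H if and only if v* := (f − u*)/τ minimizes v ↦ (1/(2τ))‖τv − f‖² over K. In particular, the unique minimizer u* satisfies u* = f − τ P_K(f/τ), where P_K is the orthogonal projection onto K. -/
open scoped RealInnerProductSpace

/-!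
Write `u₀ = f - τ p` with `p ∈ K`. Primal optimality, `0 ∈ (u₀ - f)/τ + ∂Φ(u₀)`, says `p ∈ ∂Φ(u₀)`,
i.e. `p` maximizes `⟪u₀, ·⟫` over `K`. As `u₀ = τ (f/τ - p)`, this is the variational inequality
characterizing `p = P_K(f/τ)`, the dual minimizer. Conversely, when `p` maximizes `⟪u₀, ·⟫` over
`K`, the quadratic `u ↦ ‖u - f‖²/(2τ) + ⟪u, p⟫` lies below the primal objective, touches it at
`u₀`, and exceeds its value there by `‖u - u₀‖²/(2τ)`; so `u₀` is the unique primal minimizer.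
-/

/-- Support function `Φ(u) = sup_{v ∈ K} ⟨u, v⟩`. -/
noncomputable def supportFn {H : Type*} [NormedAddCommGroup H]
    [InnerProductSpace ℝ H] (K : Set H) (u : H) : EReal :=
  ⨆ v ∈ K, ((⟪u, v⟫ : ℝ) : EReal)

section Primal

variable {H : Type*} [NormedAddCommGroup H] [InnerProductSpace ℝ H]

noncomputable def primalObjective (K : Set H) (f : H) (τ : ℝ) (u : H) : EReal :=
  ((1 / (2 * τ) * ‖u - f‖ ^ 2 : ℝ) : EReal) + supportFn K u

theorem inner_le_supportFn {K : Set H} {p : H} (hp : p ∈ K) (u : H) :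
    ((⟪u, p⟫ : ℝ) : EReal) ≤ supportFn K u :=
  le_iSup₂ (f := fun v (_ : v ∈ K) => ((⟪u, v⟫ : ℝ) : EReal)) p hp

theorem supportFn_eq_of_isMaxOn {K : Set H} {p u : H} (hp : p ∈ K)
    (hmax : IsMaxOn (fun w => ⟪u, w⟫) K p) : supportFn K u = ((⟪u, p⟫ : ℝ) : EReal) :=
  le_antisymm (iSup₂_le fun _ hv => EReal.coe_le_coe_iff.mpr (hmax hv)) (inner_le_supportFn hp u)

theorem quadratic_eq_add_norm_sub_sq {τ : ℝ} (hτ : τ ≠ 0) (f p u : H) :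
    1 / (2 * τ) * ‖u - f‖ ^ 2 + ⟪u, p⟫ =
      1 / (2 * τ) * ‖(f - τ • p) - f‖ ^ 2 + ⟪f - τ • p, p⟫
        + 1 / (2 * τ) * ‖u - (f - τ • p)‖ ^ 2 := by
  rw [show (f - τ • p) - f = -(τ • p) by abel, show u - (f - τ • p) = (u - f) + τ • p by abel,
    norm_neg, norm_add_sq_real, norm_smul, Real.norm_eq_abs, mul_pow, sq_abs,
    real_inner_smul_right, inner_sub_left, real_inner_smul_left, real_inner_self_eq_norm_sq,
    inner_sub_left]
  field_simp
  ring

variable {K : Set H} {f p : H} {τ : ℝ}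

theorem primalObjective_sub_smul (hp : p ∈ K) (hmax : IsMaxOn (fun w => ⟪f - τ • p, w⟫) K p) :
    primalObjective K f τ (f - τ • p) =
      ((1 / (2 * τ) * ‖(f - τ • p) - f‖ ^ 2 + ⟪f - τ • p, p⟫ : ℝ) : EReal) := by
  rw [primalObjective, supportFn_eq_of_isMaxOn hp hmax, EReal.coe_add]

theorem primalObjective_sub_smul_add_le (hτ : τ ≠ 0) (hp : p ∈ K)
    (hmax : IsMaxOn (fun w => ⟪f - τ • p, w⟫) K p) (u : H) :
    primalObjective K f τ (f - τ • p) + ((1 / (2 * τ) * ‖u - (f - τ • p)‖ ^ 2 : ℝ) : EReal) ≤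
      primalObjective K f τ u := by
  rw [primalObjective_sub_smul hp hmax, ← EReal.coe_add, ← quadratic_eq_add_norm_sub_sq hτ,
    EReal.coe_add, primalObjective]
  gcongr
  exact inner_le_supportFn hp u

theorem isMinOn_primalObjective (hτ : 0 < τ) (hp : p ∈ K)
    (hmax : IsMaxOn (fun w => ⟪f - τ • p, w⟫) K p) :
    IsMinOn (primalObjective K f τ) Set.univ (f - τ • p) := fun u _ =>
  le_trans (le_add_of_nonneg_right (EReal.coe_nonneg.mpr (by positivity)))
    (primalObjective_sub_smul_add_le hτ.ne' hp hmax u)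

theorem eq_of_isMinOn_primalObjective (hτ : 0 < τ) (hp : p ∈ K)
    (hmax : IsMaxOn (fun w => ⟪f - τ • p, w⟫) K p) {u : H}
    (hu : IsMinOn (primalObjective K f τ) Set.univ u) : u = f - τ • p := by
  have hle := (primalObjective_sub_smul_add_le hτ.ne' hp hmax u).trans
    (hu (Set.mem_univ (f - τ • p)))
  rw [primalObjective_sub_smul hp hmax, ← EReal.coe_add, EReal.coe_le_coe_iff] at hle
  have hsq : ‖u - (f - τ • p)‖ ^ 2 ≤ 0 :=
    nonpos_of_mul_nonpos_right (by linarith) (by positivity : 0 < 1 / (2 * τ))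
  rwa [sq_nonpos_iff, norm_eq_zero, sub_eq_zero] at hsq

end Primal

section Dual

variable {H : Type*} [NormedAddCommGroup H] [InnerProductSpace ℝ H] {K : Set H} {f p : H}
  {τ : ℝ}

theorem isMinOn_norm_sub_iff_inner_le_zero (hK : Convex ℝ K) (hp : p ∈ K) (x : H) :
    IsMinOn (fun w => ‖x - w‖) K p ↔ ∀ w ∈ K, ⟪x - p, w - p⟫ ≤ 0 := by
  rw [← norm_eq_iInf_iff_real_inner_le_zero hK hp]
  refine ⟨fun h => (h.iInf_eq hp).symm, fun h => isMinOn_iff.mpr fun w hw => ?_⟩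
  exact h ▸ ciInf_le ⟨0, by rintro _ ⟨w, rfl⟩; positivity⟩ (⟨w, hw⟩ : K)

theorem isMinOn_norm_sub_iff_isMaxOn_inner (hK : Convex ℝ K) (hτ : 0 < τ) (hp : p ∈ K) :
    IsMinOn (fun w => ‖(1 / τ) • f - w‖) K p ↔ IsMaxOn (fun w => ⟪f - τ • p, w⟫) K p := by
  have hscale : (1 / τ) • f - p = (1 / τ) • (f - τ • p) := by
    rw [smul_sub, smul_smul, one_div_mul_cancel hτ.ne', one_smul]
  rw [isMinOn_norm_sub_iff_inner_le_zero hK hp, isMaxOn_iff, hscale]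
  refine forall₂_congr fun w _ => ?_
  rw [real_inner_smul_left, inner_sub_right, ← mul_zero (1 / τ),
    mul_le_mul_iff_right₀ (by positivity), sub_nonpos]

theorem norm_smul_sub_eq (hτ : 0 < τ) (f v : H) : ‖τ • v - f‖ = τ * ‖(1 / τ) • f - v‖ := by
  have h : f - τ • v = τ • ((1 / τ) • f - v) := by
    rw [smul_sub, smul_smul, mul_one_div_cancel hτ.ne', one_smul]
  rw [norm_sub_rev, h, norm_smul, Real.norm_of_nonneg hτ.le]

theorem isMinOn_norm_smul_sub_sq_iff (hτ : 0 < τ) :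
    IsMinOn (fun v => 1 / (2 * τ) * ‖τ • v - f‖ ^ 2) K p ↔
      IsMinOn (fun w => ‖(1 / τ) • f - w‖) K p := by
  simp only [isMinOn_iff, norm_smul_sub_eq hτ]
  refine forall₂_congr fun w _ => ?_
  rw [mul_le_mul_iff_right₀ (by positivity),
    pow_le_pow_iff_left₀ (by positivity) (by positivity) two_ne_zero, mul_le_mul_iff_right₀ hτ]

end Dual

theorem one_div_smul_sub_eq_iff {H : Type*} [AddCommGroup H] [Module ℝ H] {τ : ℝ} (hτ : τ ≠ 0)
    {f u p : H} : (1 / τ) • (f - u) = p ↔ u = f - τ • p := by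
  rw [one_div, inv_smul_eq_iff₀ hτ, sub_eq_iff_eq_add, eq_sub_iff_add_eq, add_comm]
  exact eq_comm

theorem primal_dual_minimizers {H : Type*} [NormedAddCommGroup H]
    [InnerProductSpace ℝ H] [CompleteSpace H] (K : Set H)
    (hne : K.Nonempty) (hcl : IsClosed K) (hconv : Convex ℝ K)
    (f : H) (τ : ℝ) (hτ : 0 < τ) :
    -- u* minimizes the primal iff v* = (f - u*)/τ belongs to K and minimizes the dual
    (∀ u : H,
      IsMinOn (fun u : H => ((1 / (2 * τ) * ‖u - f‖ ^ 2 : ℝ) : EReal) + supportFn K u)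
        Set.univ u ↔
      ((1 / τ) • (f - u) ∈ K ∧
        IsMinOn (fun v : H => 1 / (2 * τ) * ‖τ • v - f‖ ^ 2) K ((1 / τ) • (f - u)))) ∧
    -- in particular the unique minimizer is u* = f - τ P_K(f/τ)
    (∀ p : H, p ∈ K → (∀ w ∈ K, ‖(1 / τ) • f - p‖ ≤ ‖(1 / τ) • f - w‖) →
      IsMinOn (fun u : H => ((1 / (2 * τ) * ‖u - f‖ ^ 2 : ℝ) : EReal) + supportFn K u)
        Set.univ (f - τ • p)) := by
  have hdual : ∀ p ∈ K, IsMinOn (fun v : H => 1 / (2 * τ) * ‖τ • v - f‖ ^ 2) K p ↔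
      IsMaxOn (fun w => ⟪f - τ • p, w⟫) K p := fun p hp =>
    (isMinOn_norm_smul_sub_sq_iff hτ).trans (isMinOn_norm_sub_iff_isMaxOn_inner hconv hτ hp)
  refine ⟨fun u => ⟨fun hu => ?_, ?_⟩, fun p hp hproj => ?_⟩
  · obtain ⟨p, hp, hproj⟩ :=
      exists_norm_eq_iInf_of_complete_convex hne hcl.isComplete hconv ((1 / τ) • f)
    have hmax := (isMinOn_norm_sub_iff_isMaxOn_inner hconv hτ hp).mp
      ((isMinOn_norm_sub_iff_inner_le_zero hconv hp _).mpr
        ((norm_eq_iInf_iff_real_inner_le_zero hconv hp).mp hproj))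
    rw [(one_div_smul_sub_eq_iff hτ.ne').mpr (eq_of_isMinOn_primalObjective hτ hp hmax hu)]
    exact ⟨hp, (hdual p hp).mpr hmax⟩
  · rintro ⟨hp, hmin⟩
    obtain ⟨p, hup⟩ : ∃ p, (1 / τ) • (f - u) = p := ⟨_, rfl⟩
    rw [hup] at hp hmin
    rw [(one_div_smul_sub_eq_iff hτ.ne').mp hup]
    exact isMinOn_primalObjective hτ hp ((hdual p hp).mp hmin)
  · exact isMinOn_primalObjective hτ hp
      ((isMinOn_norm_sub_iff_isMaxOn_inner hconv hτ hp).mp (isMinOn_iff.mpr hproj))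
end

section
/- Let H be a real Hilbert space, K ⊆ H a nonempty closed convex set, f ∈ H, and τ, λ > 0 with 0 < λτ < 2. Define J(v) = (1/(2τ))‖τv − f‖² for v ∈ K. For v^k, v^{k+1} ∈ K produced by the iteration v^{k+1} = P_K(v^k + λ(f − τ v^k)) (projection onto K), the descent estimate J(v^{k+1}) − J(v^k) ≤ (τ/2 − 1/λ)‖v^{k+1} − v^k‖² holds; in particular J(v^{k+1}) ≤ J(v^k), with strict inequality unless v^{k+1} = v^k. -/
/-!
Writing `J(v) = (1/(2τ))‖τv - f‖²`, the expansion of a quadratic gives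
`J(u) - J(v) = ⟪τv - f, u - v⟫ + (τ/2)‖u - v‖²`, and `τv - f` is the gradient of `J` at `v`.
Testing the variational inequality of the projected gradient step `u = P_K(v - λ ∇J(v))`
with `w = v` gives `λ⟪∇J(v), u - v⟫ ≤ -‖u - v‖²`. Together these give the estimate, and
`λτ < 2` makes its right-hand side nonpositive, negative when `u ≠ v`.
-/

open scoped RealInnerProductSpace

section

variable {H : Type*} [NormedAddCommGroup H] [InnerProductSpace ℝ H]

theorem sub_quadratic_energy_eq (f u v : H) {τ : ℝ} (hτ : τ ≠ 0) :
    1 / (2 * τ) * ‖τ • u - f‖ ^ 2 - 1 / (2 * τ) * ‖τ • v - f‖ ^ 2 =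
      ⟪τ • v - f, u - v⟫ + τ / 2 * ‖u - v‖ ^ 2 := by
  have hsplit : τ • u - f = (τ • v - f) + τ • (u - v) := by
    rw [smul_sub]; abel
  rw [hsplit, norm_add_sq_real, norm_smul, real_inner_smul_right, mul_pow, Real.norm_eq_abs,
    sq_abs]
  field_simp
  ring

theorem inner_gradient_step_le {g u v : H} {lam : ℝ} (hu : ⟪v - lam • g - u, v - u⟫ ≤ 0) :
    lam * ⟪g, u - v⟫ ≤ -‖u - v‖ ^ 2 := by
  have hsplit : v - lam • g - u = -(u - v) - lam • g := by abel
  rw [hsplit, ← neg_sub u v, inner_sub_left, inner_neg_neg, inner_neg_right,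
    real_inner_smul_left, real_inner_self_eq_norm_sq] at hu
  linarith

theorem quadratic_energy_descent (f u v : H) {τ lam : ℝ} (hτ : τ ≠ 0) (hlam : 0 < lam)
    (hu : ⟪v + lam • (f - τ • v) - u, v - u⟫ ≤ 0) :
    1 / (2 * τ) * ‖τ • u - f‖ ^ 2 - 1 / (2 * τ) * ‖τ • v - f‖ ^ 2 ≤
      (τ / 2 - 1 / lam) * ‖u - v‖ ^ 2 := by
  have hstep : lam * ⟪τ • v - f, u - v⟫ ≤ -‖u - v‖ ^ 2 := by
    have hgrad : v + lam • (f - τ • v) = v - lam • (τ • v - f) := by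
      rw [sub_eq_add_neg v, ← smul_neg, neg_sub]
    exact inner_gradient_step_le (hgrad ▸ hu)
  have hinner : ⟪τ • v - f, u - v⟫ ≤ -(1 / lam) * ‖u - v‖ ^ 2 := by
    rw [neg_mul, one_div, inv_mul_eq_div, le_neg, div_le_iff₀ hlam]
    linarith
  rw [sub_quadratic_energy_eq f u v hτ]
  linarith

end

theorem descent_estimate_general {H : Type*} [NormedAddCommGroup H]
    [InnerProductSpace ℝ H] (K : Set H)
    (f : H) (τ lam : ℝ) (hτ : 0 < τ) (hlam : 0 < lam) (hlt : lam * τ < 2)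
    (vk vk1 : H) (hvk : vk ∈ K)
    -- vk1 = P_K(vk + lam (f - τ vk)) via the variational characterization
    (hproj : ∀ w ∈ K, ⟪vk + lam • (f - τ • vk) - vk1, w - vk1⟫ ≤ (0 : ℝ)) :
    1 / (2 * τ) * ‖τ • vk1 - f‖ ^ 2 - 1 / (2 * τ) * ‖τ • vk - f‖ ^ 2 ≤
      (τ / 2 - 1 / lam) * ‖vk1 - vk‖ ^ 2 ∧
    1 / (2 * τ) * ‖τ • vk1 - f‖ ^ 2 ≤ 1 / (2 * τ) * ‖τ • vk - f‖ ^ 2 ∧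
    (vk1 ≠ vk →
      1 / (2 * τ) * ‖τ • vk1 - f‖ ^ 2 < 1 / (2 * τ) * ‖τ • vk - f‖ ^ 2) := by
  have hdescent := quadratic_energy_descent f vk1 vk hτ.ne' hlam (hproj vk hvk)
  have hcoef : τ / 2 - 1 / lam < 0 := by
    rw [sub_neg, div_lt_div_iff₀ two_pos hlam]
    linarith
  refine ⟨hdescent, ?_, fun hne => ?_⟩
  · nlinarith [sq_nonneg ‖vk1 - vk‖]
  · have hpos : 0 < ‖vk1 - vk‖ ^ 2 := by positivity [sub_ne_zero.mpr hne]
    nlinarith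

theorem descent_estimate {H : Type*} [NormedAddCommGroup H]
    [InnerProductSpace ℝ H] [CompleteSpace H] (K : Set H)
    (hne : K.Nonempty) (hcl : IsClosed K) (hconv : Convex ℝ K)
    (f : H) (τ lam : ℝ) (hτ : 0 < τ) (hlam : 0 < lam) (hlt : lam * τ < 2)
    (vk vk1 : H) (hvk : vk ∈ K) (hvk1 : vk1 ∈ K)
    -- vk1 = P_K(vk + lam (f - τ vk)) via the variational characterization
    (hproj : ∀ w ∈ K, ⟪vk + lam • (f - τ • vk) - vk1, w - vk1⟫ ≤ (0 : ℝ)) :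
    1 / (2 * τ) * ‖τ • vk1 - f‖ ^ 2 - 1 / (2 * τ) * ‖τ • vk - f‖ ^ 2 ≤
      (τ / 2 - 1 / lam) * ‖vk1 - vk‖ ^ 2 ∧
    1 / (2 * τ) * ‖τ • vk1 - f‖ ^ 2 ≤ 1 / (2 * τ) * ‖τ • vk - f‖ ^ 2 ∧
    (vk1 ≠ vk →
      1 / (2 * τ) * ‖τ • vk1 - f‖ ^ 2 < 1 / (2 * τ) * ‖τ • vk - f‖ ^ 2) :=
  descent_estimate_general K f τ lam hτ hlam hlt vk vk1 hvk hproj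
end

section
/- Let H be a real Hilbert space, K ⊆ H a nonempty closed convex set, f ∈ H, τ, λ > 0 with 0 < λτ < 2. Define the iteration v^{k+1} = P_K(v^k + λ(f − τ v^k)), starting from v^0 ∈ K. Then ‖v^{k+1} − v^k‖ → 0 as k → ∞. -/
/-!
The energy `J v = ‖τ v - f‖² / (2τ)` has gradient `τ v - f`, so the iteration is projected
gradient descent on `J` over `K` with step `λ`. Testing the variational inequality of the projection
with the previous iterate gives `J vₖ - J vₖ₊₁ ≥ (1/λ - τ/2) ‖vₖ₊₁ - vₖ‖²`, and `1/λ - τ/2 > 0`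
since `λτ < 2`. As `J ≥ 0`, the energy decreases to a limit, so its decrements, and with them
`‖vₖ₊₁ - vₖ‖`, tend to zero.
-/

open Filter Topology
open scoped RealInnerProductSpace

theorem tendsto_zero_of_mul_le_sub_succ {a d : ℕ → ℝ} {c : ℝ} (hc : 0 < c)
    (hd : ∀ k, 0 ≤ d k) (ha : BddBelow (Set.range a)) (h : ∀ k, c * d k ≤ a k - a (k + 1)) :
    Tendsto d atTop (𝓝 0) := by
  have hanti : Antitone a :=
    antitone_nat_of_succ_le fun k => by nlinarith [h k, hd k]
  have hlim := tendsto_atTop_ciInf hanti ha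
  have hdecr : Tendsto (fun k => (a k - a (k + 1)) / c) atTop (𝓝 0) := by
    simpa using (hlim.sub (hlim.comp (tendsto_add_atTop_nat 1))).div_const c
  refine squeeze_zero hd (fun k => ?_) hdecr
  rw [le_div_iff₀ hc, mul_comm]
  exact h k

section ProjectedGradient

variable {H : Type*} [NormedAddCommGroup H] [InnerProductSpace ℝ H]

theorem sq_norm_sub_le_of_inner_step_le_zero {a b g : H} {lam : ℝ}
    (h : ⟪a + lam • g - b, a - b⟫ ≤ 0) : ‖b - a‖ ^ 2 ≤ lam * ⟪g, b - a⟫ := by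
  have hsplit : ⟪a + lam • g - b, a - b⟫ = ‖b - a‖ ^ 2 - lam * ⟪g, b - a⟫ := by
    rw [show a + lam • g - b = (a - b) + lam • g by abel, inner_add_left, real_inner_smul_left,
      real_inner_self_eq_norm_sq, norm_sub_rev, ← neg_sub b a, inner_neg_right]
    ring
  linarith

noncomputable def energy (τ : ℝ) (f x : H) : ℝ := ‖τ • x - f‖ ^ 2 / (2 * τ)

theorem energy_nonneg {τ : ℝ} (hτ : 0 ≤ τ) (f x : H) : 0 ≤ energy τ f x := by
  unfold energy; positivity

theorem energy_sub_energy {τ : ℝ} (hτ : τ ≠ 0) (f a b : H) :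
    energy τ f a - energy τ f b = ⟪f - τ • a, b - a⟫ - τ / 2 * ‖b - a‖ ^ 2 := by
  unfold energy
  have hb : τ • b - f = (τ • a - f) + τ • (b - a) := by
    rw [smul_sub]; abel
  rw [hb, norm_add_sq_real, norm_smul, real_inner_smul_right, ← neg_sub f (τ • a),
    inner_neg_left, Real.norm_eq_abs, mul_pow, sq_abs]
  field_simp
  ring

theorem mul_sq_norm_sub_le_energy_sub_energy {f a b : H} {τ lam : ℝ} (hτ : τ ≠ 0)
    (hlam : 0 < lam) (hstep : ⟪a + lam • (f - τ • a) - b, a - b⟫ ≤ 0) :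
    (1 / lam - τ / 2) * ‖b - a‖ ^ 2 ≤ energy τ f a - energy τ f b := by
  have hdesc : 1 / lam * ‖b - a‖ ^ 2 ≤ ⟪f - τ • a, b - a⟫ := by
    rw [one_div_mul_eq_div, div_le_iff₀' hlam]
    exact sq_norm_sub_le_of_inner_step_le_zero hstep
  rw [energy_sub_energy hτ]
  linarith

end ProjectedGradient

theorem successive_differences_tendsto_zero_general {H : Type*} [NormedAddCommGroup H]
    [InnerProductSpace ℝ H] (K : Set H)
    (f : H) (τ lam : ℝ) (hτ : 0 < τ) (hlam : 0 < lam) (hlt : lam * τ < 2)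
    (v : ℕ → H) (hv0 : v 0 ∈ K)
    (hmem : ∀ k, v (k + 1) ∈ K)
    -- v^{k+1} = P_K(v^k + lam (f - τ v^k)) via the variational characterization
    (hproj : ∀ k, ∀ w ∈ K,
      ⟪v k + lam • (f - τ • v k) - v (k + 1), w - v (k + 1)⟫ ≤ (0 : ℝ)) :
    Filter.Tendsto (fun k => ‖v (k + 1) - v k‖) Filter.atTop (nhds 0) := by
  have hvK : ∀ k, v k ∈ K
    | 0 => hv0
    | k + 1 => hmem k
  have hc : 0 < 1 / lam - τ / 2 := by
    rw [sub_pos, lt_div_iff₀ hlam]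
    linarith
  have hsq : Tendsto (fun k => ‖v (k + 1) - v k‖ ^ 2) atTop (𝓝 0) :=
    tendsto_zero_of_mul_le_sub_succ hc (fun k => sq_nonneg _)
      ⟨0, by rintro _ ⟨k, rfl⟩; exact energy_nonneg hτ.le f (v k)⟩
      fun k => mul_sq_norm_sub_le_energy_sub_energy hτ.ne' hlam (hproj k (v k) (hvK k))
  simpa [Function.comp_def, Real.sqrt_sq (norm_nonneg _)] using
    (Real.continuous_sqrt.tendsto' 0 0 Real.sqrt_zero).comp hsq

theorem successive_differences_tendsto_zero {H : Type*} [NormedAddCommGroup H]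
    [InnerProductSpace ℝ H] [CompleteSpace H] (K : Set H)
    (hne : K.Nonempty) (hcl : IsClosed K) (hconv : Convex ℝ K)
    (f : H) (τ lam : ℝ) (hτ : 0 < τ) (hlam : 0 < lam) (hlt : lam * τ < 2)
    (v : ℕ → H) (hv0 : v 0 ∈ K)
    (hmem : ∀ k, v (k + 1) ∈ K)
    -- v^{k+1} = P_K(v^k + lam (f - τ v^k)) via the variational characterization
    (hproj : ∀ k, ∀ w ∈ K,
      ⟪v k + lam • (f - τ • v k) - v (k + 1), w - v (k + 1)⟫ ≤ (0 : ℝ)) :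
    Filter.Tendsto (fun k => ‖v (k + 1) - v k‖) Filter.atTop (nhds 0) :=
  successive_differences_tendsto_zero_general K f τ lam hτ hlam hlt v hv0 hmem hproj
end
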